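/- For u(x) = |x|²/2 + c|x|^{2-n} on ℝⁿ \ {0} (n ≥ 3) and j ≥ 2, the (1,j) cofactor of the Hessian satisfies cof(D²u)_{1j} = cn(2-n)|x|^{-n-2}x₁x_j + O(|x|^{-2n}) as |x| → ∞. -/

import Mathlib

open EuclideanSpace Metric

/-- Partial derivative in direction `i`. -/
noncomputable def pd {n : ℕ} (f : EuclideanSpace ℝ (Fin n) → ℝ) (i : Fin n)
    (x : EuclideanSpace ℝ (Fin n)) : ℝ :=
  fderiv ℝ f x (EuclideanSpace.single i 1)

/-- Second partial derivative `∂_i ∂_j f`. -/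
noncomputable def pd2 {n : ℕ} (f : EuclideanSpace ℝ (Fin n) → ℝ) (i j : Fin n)
    (x : EuclideanSpace ℝ (Fin n)) : ℝ :=
  pd (pd f j) i x

/-- Hessian matrix of `f` at `x`. -/
noncomputable def hess {n : ℕ} (f : EuclideanSpace ℝ (Fin n) → ℝ)
    (x : EuclideanSpace ℝ (Fin n)) : Matrix (Fin n) (Fin n) ℝ :=
  Matrix.of fun i j => pd2 f i j x

/-- The `(i,j)` cofactor of a matrix. -/
noncomputable def cof {n : ℕ} (M : Matrix (Fin n) (Fin n) ℝ) (i j : Fin n) : ℝ :=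
  M.adjugate j i

/-!
Away from the origin `u` is radial, `u(x) = g(|x|²)`, so `D²u = 2g'(|x|²) I + 4g''(|x|²) x xᵀ`,
which here is `(1 + a) I - b x xᵀ` with `a = c(2-n)|x|^{-n}` and `b = cn(2-n)|x|^{-n-2}`.
The adjugate of a scalar matrix minus a rank-one one is explicit:
`adj(α I - b v vᵀ) = α^{n-2} ((α - b|v|²) I + b v vᵀ)`. Off the diagonal this gives
`cof(D²u)_{1j} = (1 + a)^{n-2} b x₁ x_j`, and since both `a` and `b x₁ x_j` are `O(|x|^{-n})`,
replacing `(1 + a)^{n-2}` by `1` costs `O(|x|^{-2n})`.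
-/

open Filter Topology

namespace Matrix

variable {ι K : Type*} [Fintype ι] [DecidableEq ι] [Field K]

theorem det_smul_one_sub_smul_vecMulVec {m : ℕ} (h : Fintype.card ι = m + 1) {α : K}
    (hα : α ≠ 0) (b : K) (v : ι → K) :
    det (α • 1 - b • vecMulVec v v) = α ^ m * (α - b * (v ⬝ᵥ v)) := by
  have : α • 1 - b • vecMulVec v v = α • (1 + vecMulVec ((-b / α) • v) v) := by
    rw [smul_vecMulVec, smul_add, smul_smul, mul_div_cancel₀ _ hα, neg_smul, ← sub_eq_add_neg,
      smul_one_eq_diagonal]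
  rw [this, det_smul, vecMulVec_eq (Fin 1), det_one_add_replicateCol_mul_replicateRow, h,
    dotProduct_smul, smul_eq_mul, pow_succ]
  field_simp
  ring

theorem adjugate_smul_one_sub_smul_vecMulVec {m : ℕ} (h : Fintype.card ι = m + 2) {α b : K}
    (v : ι → K) (hα : α ≠ 0) (hs : α - b * (v ⬝ᵥ v) ≠ 0) :
    adjugate (α • 1 - b • vecMulVec v v) =
      α ^ m • ((α - b * (v ⬝ᵥ v)) • 1 + b • vecMulVec v v) := by
  set M := α • 1 - b • vecMulVec v v
  have hdet : M.det = α ^ (m + 1) * (α - b * (v ⬝ᵥ v)) :=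
    det_smul_one_sub_smul_vecMulVec h hα b v
  have hsq : vecMulVec v v * vecMulVec v v = (v ⬝ᵥ v) • vecMulVec v v := by
    rw [vecMulVec_mul_vecMulVec, vecMulVec_smul]
  have hM : M * (α ^ m • ((α - b * (v ⬝ᵥ v)) • 1 + b • vecMulVec v v)) = M.det • 1 := by
    simp only [M, hdet, Matrix.mul_smul, Matrix.mul_add, Matrix.sub_mul, Matrix.smul_mul,
      Matrix.one_mul, Matrix.mul_one, hsq]
    module
  have hunit : IsUnit M := M.isUnit_iff_isUnit_det.mpr <| by
    rw [hdet]; exact (mul_ne_zero (pow_ne_zero _ hα) hs).isUnit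
  exact hunit.mul_left_cancel (by rw [mul_adjugate, hM])

end Matrix

section Radial

variable {n : ℕ} {g g' : ℝ → ℝ} {d d₂ : ℝ} {x : EuclideanSpace ℝ (Fin n)}

theorem pd_comp_norm_sq (hg : HasDerivAt g d (‖x‖ ^ 2)) (i : Fin n) :
    pd (fun y => g (‖y‖ ^ 2)) i x = 2 * d * x i := by
  have h : HasFDerivAt (fun y => g (‖y‖ ^ 2)) _ x :=
    hg.comp_hasFDerivAt x (hasStrictFDerivAt_norm_sq x).hasFDerivAt
  rw [pd, h.fderiv]
  simp [EuclideanSpace.inner_single_right]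
  ring

theorem pd2_comp_norm_sq (hg : ∀ᶠ t in 𝓝 (‖x‖ ^ 2), HasDerivAt g (g' t) t)
    (hg' : HasDerivAt g' d₂ (‖x‖ ^ 2)) (i j : Fin n) :
    pd2 (fun y => g (‖y‖ ^ 2)) i j x =
      (if i = j then 2 * g' (‖x‖ ^ 2) else 0) + 4 * d₂ * x i * x j := by
  have hpd : pd (fun y => g (‖y‖ ^ 2)) j =ᶠ[𝓝 x] fun y => 2 * g' (‖y‖ ^ 2) * y j :=
    ((continuous_norm.pow 2).tendsto x).eventually hg |>.mono fun y hy => pd_comp_norm_sq hy j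
  have hderiv : HasFDerivAt (fun y => 2 * g' (‖y‖ ^ 2) * y j) _ x :=
    ((hg'.comp_hasFDerivAt x (hasStrictFDerivAt_norm_sq x).hasFDerivAt).const_mul 2).mul
      (EuclideanSpace.proj (𝕜 := ℝ) j).hasFDerivAt
  rw [pd2, pd, hpd.fderiv_eq, hderiv.fderiv]
  simp [EuclideanSpace.inner_single_right, eq_comm]
  ring

theorem hess_comp_norm_sq (hg : ∀ᶠ t in 𝓝 (‖x‖ ^ 2), HasDerivAt g (g' t) t)
    (hg' : HasDerivAt g' d₂ (‖x‖ ^ 2)) :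
    hess (fun y => g (‖y‖ ^ 2)) x =
      (2 * g' (‖x‖ ^ 2)) • 1 + (4 * d₂) • Matrix.vecMulVec x x := by
  ext i j
  simp [hess, pd2_comp_norm_sq hg hg', Matrix.one_apply, Matrix.vecMulVec_apply, mul_assoc]

end Radial

section Euclidean

variable {ι : Type*} [Fintype ι] (x : EuclideanSpace ℝ ι)

theorem EuclideanSpace.dotProduct_self_eq_norm_sq : (x ⬝ᵥ x : ℝ) = ‖x‖ ^ 2 := by
  rw [← real_inner_self_eq_norm_sq, EuclideanSpace.inner_eq_star_dotProduct, star_trivial]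


theorem abs_mul_rpow_norm_mul_apply_mul_apply_le (hx : x ≠ 0) (a e : ℝ) (i j : ι) :
    |a * ‖x‖ ^ (e - 2) * x i * x j| ≤ |a| * ‖x‖ ^ e := by
  have hxi := PiLp.norm_apply_le x i
  have hxj := PiLp.norm_apply_le x j
  rw [Real.norm_eq_abs] at hxi hxj
  have hsplit : ‖x‖ ^ e = ‖x‖ ^ (e - 2) * (‖x‖ * ‖x‖) := by
    rw [← sq, ← Real.rpow_natCast, ← Real.rpow_add (norm_pos_iff.mpr hx)]
    norm_num
  rw [hsplit, mul_assoc, mul_assoc, abs_mul, abs_mul, abs_mul,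
    abs_of_nonneg (Real.rpow_nonneg (norm_nonneg x) _)]
  gcongr

end Euclidean

theorem sq_rpow_of_nonneg {r : ℝ} (hr : 0 ≤ r) (q : ℝ) : (r ^ 2) ^ q = r ^ (2 * q) := by
  rw [← Real.rpow_natCast, ← Real.rpow_mul hr]
  norm_num

theorem mul_rpow_neg_le_one {r p : ℝ} (hr : 1 ≤ r) (hp : 1 ≤ p) : r * r ^ (-p) ≤ 1 := by
  calc r * r ^ (-p) = r ^ (1 - p) := by
        rw [sub_eq_add_neg, Real.rpow_add (by linarith), Real.rpow_one]
    _ ≤ r ^ (0 : ℝ) := Real.rpow_le_rpow_of_exponent_le hr (by linarith)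
    _ = 1 := Real.rpow_zero r

theorem abs_one_add_pow_sub_one_le (m : ℕ) {a : ℝ} (ha : |a| ≤ 1) :
    |(1 + a) ^ m - 1| ≤ m * 2 ^ m * |a| := by
  have hmax : max |1 + a| |1| ≤ 2 := max_le (by linarith [abs_add_le 1 a, abs_one (α := ℝ)])
    (by norm_num)
  calc |(1 + a) ^ m - 1| = |(1 + a) ^ m - 1 ^ m| := by rw [one_pow]
    _ ≤ |1 + a - 1| * m * max |1 + a| |1| ^ (m - 1) := abs_pow_sub_pow_le _ _ _
    _ ≤ |a| * m * 2 ^ m := by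
      rw [add_sub_cancel_left]
      gcongr
      exact (pow_le_pow_left₀ (by positivity) hmax _).trans
        (pow_le_pow_right₀ (by norm_num) (Nat.sub_le m 1))
    _ = m * 2 ^ m * |a| := by ring

theorem hess_half_norm_sq_add_mul_norm_rpow {n : ℕ} (c : ℝ) {x : EuclideanSpace ℝ (Fin n)}
    (hx : x ≠ 0) :
    hess (fun y => ‖y‖ ^ 2 / 2 + c * ‖y‖ ^ ((2 : ℝ) - n)) x =
      (1 + c * (2 - n) * ‖x‖ ^ (-(n : ℝ))) • 1 -
        (c * n * (2 - n) * ‖x‖ ^ (-(n : ℝ) - 2)) • Matrix.vecMulVec x x := by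
  set p : ℝ := (2 - n) / 2
  have hu : (fun y : EuclideanSpace ℝ (Fin n) => ‖y‖ ^ 2 / 2 + c * ‖y‖ ^ ((2 : ℝ) - n)) =
      fun y => (fun t => t / 2 + c * t ^ p) (‖y‖ ^ 2) := by
    ext y
    dsimp only
    rw [sq_rpow_of_nonneg (norm_nonneg y), show 2 * p = 2 - n by ring]
  have hg : ∀ᶠ t in 𝓝 (‖x‖ ^ 2), HasDerivAt (fun t => t / 2 + c * t ^ p)
      ((fun t => 1 / 2 + c * (p * t ^ (p - 1))) t) t :=
    (eventually_ne_nhds (by positivity)).mono fun t ht =>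
      ((hasDerivAt_id t).div_const 2).add ((Real.hasDerivAt_rpow_const (Or.inl ht)).const_mul c)
  have hg' : HasDerivAt (fun t => 1 / 2 + c * (p * t ^ (p - 1)))
      (c * (p * ((p - 1) * (‖x‖ ^ 2) ^ (p - 1 - 1)))) (‖x‖ ^ 2) :=
    (((Real.hasDerivAt_rpow_const (Or.inl (by positivity))).const_mul p).const_mul c).const_add _
  have he₁ : 2 * (p - 1) = -(n : ℝ) := by ring
  have he₂ : 2 * (p - 1 - 1) = -(n : ℝ) - 2 := by ring
  rw [hu, hess_comp_norm_sq hg hg', sq_rpow_of_nonneg (norm_nonneg x),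
    sq_rpow_of_nonneg (norm_nonneg x), he₁, he₂]
  module

theorem cof_hess_half_norm_sq_add_mul_norm_rpow {n : ℕ} (hn : 2 ≤ n) (c : ℝ)
    {x : EuclideanSpace ℝ (Fin n)} (hx : x ≠ 0) {i j : Fin n} (hij : i ≠ j)
    (ha : n * |c * (2 - n) * ‖x‖ ^ (-(n : ℝ))| < 1) :
    cof (hess (fun y => ‖y‖ ^ 2 / 2 + c * ‖y‖ ^ ((2 : ℝ) - n)) x) i j =
      (1 + c * (2 - n) * ‖x‖ ^ (-(n : ℝ))) ^ (n - 2) *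
        (c * n * (2 - n) * ‖x‖ ^ (-(n : ℝ) - 2) * x i * x j) := by
  set a := c * (2 - n) * ‖x‖ ^ (-(n : ℝ))
  set b := c * n * (2 - n) * ‖x‖ ^ (-(n : ℝ) - 2)
  have hb : b * (x ⬝ᵥ x) = n * a := by
    have hpow : ‖x‖ ^ (-(n : ℝ) - 2) * ‖x‖ ^ 2 = ‖x‖ ^ (-(n : ℝ)) := by
      rw [← Real.rpow_natCast, ← Real.rpow_add (norm_pos_iff.mpr hx)]
      norm_num
    rw [EuclideanSpace.dotProduct_self_eq_norm_sq]
    linear_combination (c * n * (2 - n)) * hpow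
  have hn₁ : (1 : ℝ) ≤ n := by exact_mod_cast (by omega : 1 ≤ n)
  have habs : |a| ≤ n * |a| := le_mul_of_one_le_left (abs_nonneg a) hn₁
  have hα : 1 + a ≠ 0 := by linarith [neg_abs_le a]
  have hs : 1 + a - b * (x ⬝ᵥ x) ≠ 0 := by
    have : (n - 1) * a ≤ (n - 1) * |a| := mul_le_mul_of_nonneg_left (le_abs_self a) (by linarith)
    rw [hb]
    linarith [abs_nonneg a]
  rw [cof, hess_half_norm_sq_add_mul_norm_rpow c hx,
    Matrix.adjugate_smul_one_sub_smul_vecMulVec (m := n - 2) (by simp; omega) _ hα hs]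
  simp only [Matrix.smul_apply, Matrix.add_apply, Matrix.one_apply_ne hij.symm,
    Matrix.vecMulVec_apply, smul_eq_mul]
  ring

/-- For `u(x) = |x|²/2 + c|x|^{2-n}` and `j ≥ 2`, the `(1,j)` cofactor of the Hessian
satisfies `cof(D²u)_{1j} = cn(2-n)|x|^{-n-2}x₁x_j + O(|x|^{-2n})`. -/
theorem cofactor_one_j_expansion {n : ℕ} (hn : 3 ≤ n) (c : ℝ)
    (j : Fin n) (hj : j ≠ ⟨0, by omega⟩) :
    ∃ C R : ℝ, 0 < C ∧ ∀ x : EuclideanSpace ℝ (Fin n), R ≤ ‖x‖ →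
      |cof (hess (fun y => ‖y‖ ^ 2 / 2 + c * ‖y‖ ^ ((2 : ℝ) - n)) x)
          (⟨0, by omega⟩ : Fin n) j -
        c * n * ((2 : ℝ) - n) * ‖x‖ ^ (-(n : ℝ) - 2) * x ⟨0, by omega⟩ * x j|
      ≤ C * ‖x‖ ^ (-(2 * n : ℝ)) := by
  set k := |c * (2 - n)|
  set x₁ : Fin n := ⟨0, by omega⟩
  refine ⟨(n - 2 : ℕ) * 2 ^ (n - 2) * n * k ^ 2 + 1, 2 * n * k + 1, by positivity,
    fun x hxR => ?_⟩
  have hpos : 0 < ‖x‖ := lt_of_lt_of_le (by positivity) hxR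
  set s := ‖x‖ ^ (-(n : ℝ))
  have hs₀ : 0 < s := Real.rpow_pos_of_pos hpos _
  have hs : (2 * n * k + 1) * s ≤ 1 := (mul_le_mul_of_nonneg_right hxR hs₀.le).trans
    (mul_rpow_neg_le_one ((le_add_of_nonneg_left (by positivity)).trans hxR) (by norm_cast; omega))
  have hnks : n * (k * s) < 1 := by linarith
  have hks : k * s ≤ n * (k * s) :=
    le_mul_of_one_le_left (by positivity) (by norm_cast; omega)
  have ha : |c * (2 - n) * s| = k * s := by rw [abs_mul, abs_of_pos hs₀]
  rw [cof_hess_half_norm_sq_add_mul_norm_rpow (by omega) c (norm_pos_iff.mp hpos) (Ne.symm hj)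
    (by rwa [ha])]
  have hT : |c * n * (2 - n) * ‖x‖ ^ (-(n : ℝ) - 2) * x x₁ * x j| ≤ n * (k * s) := by
    refine (abs_mul_rpow_norm_mul_apply_mul_apply_le x (norm_pos_iff.mp hpos) _ _ _ _).trans ?_
    rw [mul_right_comm, abs_mul, Nat.abs_cast]
    exact le_of_eq (by rw [mul_comm k, mul_assoc])
  have hpow := abs_one_add_pow_sub_one_le (n - 2) (a := c * (2 - n) * s) (by rw [ha]; linarith)
  have hs₂ : ‖x‖ ^ (-(2 * n : ℝ)) = s ^ 2 := by rw [sq, ← Real.rpow_add hpos]; ring_nf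
  rw [ha] at hpow
  rw [hs₂, ← sub_one_mul, abs_mul]
  calc _ ≤ ((n - 2 : ℕ) * 2 ^ (n - 2) * (k * s)) * (n * (k * s)) := by gcongr
    _ ≤ _ := by nlinarith [sq_nonneg s]
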